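/- arXiv:2011.06434 — 6 statements merged into one kernel-verified Lean document; each statement's English description precedes it below -/
import Mathlib

section
/- Let H be a complex inner product space, let X₊, X₋, V : H → H be linear maps, let K, η be real numbers and k an integer. Suppose ⟨X₊ a, b⟩ = −⟨a, X₋ b⟩ for all a, b ∈ H, that X₊∘X₋ − X₋∘X₊ = (i K/2)·V, and that u ∈ H satisfies V u = i k·u and (−4·X₊∘X₋ + i K·V − K·V∘V) u = η·u. Then ‖X₊ u‖² = (1/4)(η − K k − K k²)·‖u‖² and ‖X₋ u‖² = (1/4)(η + K k − K k²)·‖u‖². -/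
/-!
Both identities come from writing `‖X₊u‖² = -⟪u, X₋X₊u⟫` and `‖X₋u‖² = -⟪X₊X₋u, u⟫`.
On the joint eigenvector `u` the Casimir equation makes `X₊X₋u` a real multiple of `u`, and the
commutation relation then does the same for `X₋X₊u = X₊X₋u + (Kk/2)u`.
-/

open scoped ComplexInnerProductSpace InnerProductSpace
open Complex

section SkewAdjointPair

variable {𝕜 E : Type*} [RCLike 𝕜] [NormedAddCommGroup E] [InnerProductSpace 𝕜 E]
  {A B : E →ₗ[𝕜] E}

lemma inner_map_eq_neg_inner_map_symm (hAB : ∀ a b, ⟪A a, b⟫_𝕜 = -⟪a, B b⟫_𝕜) (a b : E) :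
    ⟪B a, b⟫_𝕜 = -⟪a, A b⟫_𝕜 := by
  rw [← inner_conj_symm, ← inner_conj_symm a, hAB b a, map_neg, neg_neg]

lemma norm_sq_map_eq_of_comp_apply_eq_smul (hAB : ∀ a b, ⟪A a, b⟫_𝕜 = -⟪a, B b⟫_𝕜)
    {u : E} {c : ℝ} (h : B (A u) = (c : 𝕜) • u) : ‖A u‖ ^ 2 = -c * ‖u‖ ^ 2 := by
  rw [norm_sq_eq_re_inner (𝕜 := 𝕜), hAB, h, inner_smul_right, ← RCLike.real_smul_eq_coe_mul,
    map_neg, RCLike.smul_re, ← norm_sq_eq_re_inner]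
  ring

end SkewAdjointPair

section Ladder

variable {M : Type*} [AddCommGroup M] [Module ℂ M] {Xp Xm V : M →ₗ[ℂ] M} {K k : ℝ} {u : M}

lemma raise_lower_apply_of_casimir_apply {η : ℝ} (hV : V u = (I * k) • u)
    (hΩ : (-((4 : ℂ) • (Xp ∘ₗ Xm)) + (I * K) • V - (K : ℂ) • (V ∘ₗ V)) u = (η : ℂ) • u) :
    Xp (Xm u) = (((-η - K * k + K * k ^ 2) / 4 : ℝ) : ℂ) • u := by
  simp only [LinearMap.sub_apply, LinearMap.add_apply, LinearMap.smul_apply,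
    LinearMap.comp_apply, LinearMap.neg_apply, hV, map_smul] at hΩ
  push_cast
  linear_combination (norm := module) (-1 / 4 : ℂ) • hΩ + ((K * k - K * k ^ 2) / 4) • I_mul_I • u

lemma lower_raise_apply_of_commutator (hV : V u = (I * k) • u)
    (hcomm : Xp ∘ₗ Xm - Xm ∘ₗ Xp = ((I * K) / 2) • V) :
    Xm (Xp u) = Xp (Xm u) + ((K * k / 2 : ℝ) : ℂ) • u := by
  have hcomm_u := LinearMap.congr_fun hcomm u
  simp only [LinearMap.sub_apply, LinearMap.smul_apply, LinearMap.comp_apply, hV] at hcomm_u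
  push_cast
  linear_combination (norm := module) -hcomm_u - (K * k / 2 : ℂ) • I_mul_I • u

end Ladder

/-- norm identities (equation (2.1) of the paper) for the ladder operators:
if `⟨X₊a, b⟩ = −⟨a, X₋b⟩`, `[X₊, X₋] = (iK/2)·V`, `Vu = ik·u` and
`(−4X₊X₋ + iK·V − K·V²)u = ηu`, then `‖X₊u‖² = (1/4)(η − Kk − Kk²)‖u‖²` and
`‖X₋u‖² = (1/4)(η + Kk − Kk²)‖u‖²`. -/
theorem ladder_norms {H : Type*} [NormedAddCommGroup H] [InnerProductSpace ℂ H]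
    (Xp Xm V : H →ₗ[ℂ] H) (K η : ℝ) (k : ℤ)
    (hadj : ∀ a b : H, ⟪Xp a, b⟫ = -⟪a, Xm b⟫)
    (hcomm : Xp ∘ₗ Xm - Xm ∘ₗ Xp = ((Complex.I * (K : ℂ)) / 2) • V)
    (u : H)
    (hV : V u = (Complex.I * (k : ℂ)) • u)
    (hΩ : (-((4 : ℂ) • (Xp ∘ₗ Xm)) + (Complex.I * (K : ℂ)) • V - (K : ℂ) • (V ∘ₗ V)) u
        = (η : ℂ) • u) :
    ‖Xp u‖ ^ 2 = (1 / 4) * (η - K * (k : ℝ) - K * (k : ℝ) ^ 2) * ‖u‖ ^ 2 ∧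
    ‖Xm u‖ ^ 2 = (1 / 4) * (η + K * (k : ℝ) - K * (k : ℝ) ^ 2) * ‖u‖ ^ 2 := by
  have hV' : V u = (I * ((k : ℝ) : ℂ)) • u := by exact_mod_cast hV
  have hpm := raise_lower_apply_of_casimir_apply hV' hΩ
  have hmp : Xm (Xp u) = (((-η + K * k + K * k ^ 2) / 4 : ℝ) : ℂ) • u := by
    rw [lower_raise_apply_of_commutator hV' hcomm, hpm, ← add_smul, ← ofReal_add]
    ring_nf
  constructor
  · rw [norm_sq_map_eq_of_comp_apply_eq_smul (c := (-η + K * k + K * k ^ 2) / 4) hadj hmp]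
    ring
  · rw [norm_sq_map_eq_of_comp_apply_eq_smul (c := (-η - K * k + K * k ^ 2) / 4)
      (inner_map_eq_neg_inner_map_symm hadj) hpm]
    ring
end

section
/- Let H be a complex inner product space, let X₊, X₋, V : H → H be linear maps, let K, η be real numbers and k an integer. Suppose ⟨X₊ a, b⟩ = −⟨a, X₋ b⟩ for all a, b ∈ H, that X₊∘X₋ − X₋∘X₊ = (i K/2)·V, and that u ∈ H is nonzero with V u = i k·u and (−4·X₊∘X₋ + i K·V − K·V∘V) u = η·u. Then η + K k − K k² ≥ 0 and η − K k − K k² ≥ 0; moreover, if η − K k − K k² > 0 then X₊ u ≠ 0, and if η + K k − K k² > 0 then X₋ u ≠ 0. -/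
/-!
On the joint eigenvector `u`, the Casimir equation and `V u = i k u` give `X₊ X₋ u` as a real
multiple of `u`, and the commutator relation then gives `X₋ X₊ u` as well. Since `X₊* = −X₋`,
`‖X₊ u‖² = −⟪u, X₋ X₊ u⟫` and `‖X₋ u‖² = −⟪u, X₊ X₋ u⟫`, which yields
`‖X₊ u‖² = ¼ (η − K k − K k²) ‖u‖²` and `‖X₋ u‖² = ¼ (η + K k − K k²) ‖u‖²`;
both claims follow because `‖u‖ > 0`.
-/

open scoped ComplexInnerProductSpace
open Complex

section NormSq

variable {E F : Type*} [NormedAddGroup E] [SeminormedAddGroup F] {u : E} {v : F} {c : ℝ}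

lemma nonneg_of_norm_sq_eq_mul (hu : u ≠ 0) (h : ‖v‖ ^ 2 = c * ‖u‖ ^ 2) : 0 ≤ c :=
  nonneg_of_mul_nonneg_left (h ▸ sq_nonneg ‖v‖) (by positivity)

lemma ne_zero_of_norm_sq_eq_mul (hu : u ≠ 0) (h : ‖v‖ ^ 2 = c * ‖u‖ ^ 2) (hc : 0 < c) :
    v ≠ 0 := by
  rintro rfl
  have : 0 < c * ‖u‖ ^ 2 := by positivity
  simp_all

end NormSq

section SkewAdjoint

open scoped InnerProductSpace

variable {𝕜 H : Type*} [RCLike 𝕜] [NormedAddCommGroup H] [InnerProductSpace 𝕜 H] {A B : H → H}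

lemma inner_apply_eq_neg_inner_apply_symm (h : ∀ a b, ⟪A a, b⟫_𝕜 = -⟪a, B b⟫_𝕜) (a b : H) :
    ⟪B a, b⟫_𝕜 = -⟪a, A b⟫_𝕜 := by
  rw [← inner_conj_symm, ← neg_neg ⟪b, B a⟫_𝕜, ← h, map_neg, inner_conj_symm]

lemma norm_sq_apply_eq_of_apply_apply_eq (h : ∀ a b, ⟪A a, b⟫_𝕜 = -⟪a, B b⟫_𝕜) {u : H} {c : ℝ}
    (hc : B (A u) = -(c : 𝕜) • u) : ‖A u‖ ^ 2 = c * ‖u‖ ^ 2 :=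
  calc ‖A u‖ ^ 2 = RCLike.re ⟪A u, A u⟫_𝕜 := norm_sq_eq_re_inner _
    _ = RCLike.re (-⟪u, B (A u)⟫_𝕜) := by rw [h]
    _ = c * RCLike.re ⟪u, u⟫_𝕜 := by
      rw [hc, inner_smul_right, neg_mul, neg_neg, RCLike.re_ofReal_mul]
    _ = c * ‖u‖ ^ 2 := by rw [← norm_sq_eq_re_inner]

end SkewAdjoint

section Ladder

variable {H : Type*} [AddCommGroup H] [Module ℂ H]

def casimir (Xp Xm V : H →ₗ[ℂ] H) (K : ℝ) : H →ₗ[ℂ] H :=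
  -((4 : ℂ) • (Xp ∘ₗ Xm)) + (I * K) • V - (K : ℂ) • (V ∘ₗ V)

variable {Xp Xm V : H →ₗ[ℂ] H} {K η k : ℝ} {u : H}

lemma raise_lower_apply_eq_smul (hV : V u = (I * k) • u)
    (hΩ : casimir Xp Xm V K u = (η : ℂ) • u) :
    Xp (Xm u) = -(((η + K * k - K * k ^ 2) / 4 : ℝ) : ℂ) • u := by
  simp only [casimir, LinearMap.sub_apply, LinearMap.add_apply, LinearMap.smul_apply,
    LinearMap.neg_apply, LinearMap.comp_apply, hV, map_smul, smul_smul] at hΩ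
  linear_combination (norm := match_scalars) (-(1 / 4 : ℂ)) • hΩ
  · ring
  · linear_combination (K * k / 4 - K * k ^ 2 / 4 : ℂ) * I_sq

lemma lower_raise_apply_eq_smul (hcomm : Xp ∘ₗ Xm - Xm ∘ₗ Xp = ((I * K) / 2) • V)
    (hV : V u = (I * k) • u) (hΩ : casimir Xp Xm V K u = (η : ℂ) • u) :
    Xm (Xp u) = -(((η - K * k - K * k ^ 2) / 4 : ℝ) : ℂ) • u := by
  have hc := LinearMap.congr_fun hcomm u
  simp only [LinearMap.sub_apply, LinearMap.smul_apply, LinearMap.comp_apply, hV,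
    raise_lower_apply_eq_smul hV hΩ, smul_smul] at hc
  linear_combination (norm := match_scalars) -hc
  · ring
  · linear_combination (-K * k / 2 : ℂ) * I_sq

end Ladder

/-- if `⟨X₊a, b⟩ = −⟨a, X₋b⟩`, `[X₊, X₋] = (iK/2)·V`, and `u ≠ 0`
satisfies `Vu = ik·u` and `(−4X₊X₋ + iK·V − K·V²)u = ηu`, then
`η + Kk − Kk² ≥ 0` and `η − Kk − Kk² ≥ 0`; moreover `η − Kk − Kk² > 0` forces
`X₊u ≠ 0` and `η + Kk − Kk² > 0` forces `X₋u ≠ 0`. -/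
theorem ladder_injectivity {H : Type*} [NormedAddCommGroup H] [InnerProductSpace ℂ H]
    (Xp Xm V : H →ₗ[ℂ] H) (K η : ℝ) (k : ℤ)
    (hadj : ∀ a b : H, ⟪Xp a, b⟫ = -⟪a, Xm b⟫)
    (hcomm : Xp ∘ₗ Xm - Xm ∘ₗ Xp = ((Complex.I * (K : ℂ)) / 2) • V)
    (u : H) (hu : u ≠ 0)
    (hV : V u = (Complex.I * (k : ℂ)) • u)
    (hΩ : (-((4 : ℂ) • (Xp ∘ₗ Xm)) + (Complex.I * (K : ℂ)) • V - (K : ℂ) • (V ∘ₗ V)) u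
        = (η : ℂ) • u) :
    0 ≤ η + K * (k : ℝ) - K * (k : ℝ) ^ 2 ∧
    0 ≤ η - K * (k : ℝ) - K * (k : ℝ) ^ 2 ∧
    (0 < η - K * (k : ℝ) - K * (k : ℝ) ^ 2 → Xp u ≠ 0) ∧
    (0 < η + K * (k : ℝ) - K * (k : ℝ) ^ 2 → Xm u ≠ 0) := by
  have hV' : V u = (I * ((k : ℝ) : ℂ)) • u := by rwa [ofReal_intCast]
  have hXp : ‖Xp u‖ ^ 2 = (η - K * k - K * k ^ 2) / 4 * ‖u‖ ^ 2 :=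
    norm_sq_apply_eq_of_apply_apply_eq hadj (lower_raise_apply_eq_smul hcomm hV' hΩ)
  have hXm : ‖Xm u‖ ^ 2 = (η + K * k - K * k ^ 2) / 4 * ‖u‖ ^ 2 :=
    norm_sq_apply_eq_of_apply_apply_eq (inner_apply_eq_neg_inner_apply_symm hadj)
      (raise_lower_apply_eq_smul hV' hΩ)
  refine ⟨?_, ?_, fun h ↦ ne_zero_of_norm_sq_eq_mul hu hXp (by linarith),
    fun h ↦ ne_zero_of_norm_sq_eq_mul hu hXm (by linarith)⟩
  · linarith [nonneg_of_norm_sq_eq_mul hu hXm]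
  · linarith [nonneg_of_norm_sq_eq_mul hu hXp]
end

section
/- Let H be a complex inner product space and let X₊, X₋ : H → H be linear maps with ⟨X₊ a, b⟩ = −⟨a, X₋ b⟩ for all a, b ∈ H. Let f, g ∈ H with ⟨f, g⟩ = 0, let l be a natural number, and suppose there are complex scalars c₀, …, c_{l−1} such that X₋(X₊(X₊ʲ f)) = cⱼ · X₊ʲ f and X₋(X₊(X₊ʲ g)) = cⱼ · X₊ʲ g for every j with 0 ≤ j < l (where X₊ʲ denotes j-fold application of X₊). Then ⟨X₊ˡ f, X₊ˡ g⟩ = 0. -/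
open scoped ComplexInnerProductSpace

section SkewAdjointPair

variable {𝕜 E : Type*} [RCLike 𝕜] [NormedAddCommGroup E] [InnerProductSpace 𝕜 E]
  {Xp Xm : E → E}

theorem inner_apply_apply_of_skew_adjoint_pair
    (hadj : ∀ a b : E, inner 𝕜 (Xp a) b = -inner 𝕜 a (Xm b))
    {a b : E} {c : 𝕜} (hb : Xm (Xp b) = c • b) :
    inner 𝕜 (Xp a) (Xp b) = -(c * inner 𝕜 a b) := by
  rw [hadj, hb, inner_smul_right]

theorem inner_apply_apply_eq_zero_of_skew_adjoint_pair
    (hadj : ∀ a b : E, inner 𝕜 (Xp a) b = -inner 𝕜 a (Xm b))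
    {a b : E} {c : 𝕜} (hb : Xm (Xp b) = c • b) (hab : inner 𝕜 a b = 0) :
    inner 𝕜 (Xp a) (Xp b) = 0 := by
  rw [inner_apply_apply_of_skew_adjoint_pair hadj hb, hab, mul_zero, neg_zero]

end SkewAdjointPair

theorem ladder_orbit_orthogonality_general {H : Type*} [NormedAddCommGroup H] [InnerProductSpace ℂ H]
    (Xp Xm : H →ₗ[ℂ] H)
    (hadj : ∀ a b : H, ⟪Xp a, b⟫ = -⟪a, Xm b⟫)
    (f g : H) (hfg : ⟪f, g⟫ = 0) (l : ℕ) (c : ℕ → ℂ)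
    (hg : ∀ j < l, Xm (Xp ((Xp ^ j) g)) = c j • (Xp ^ j) g) :
    ⟪(Xp ^ l) f, (Xp ^ l) g⟫ = 0 := by
  induction l with
  | zero => simpa using hfg
  | succ n ih =>
    rw [pow_succ', Module.End.mul_apply, Module.End.mul_apply]
    exact inner_apply_apply_eq_zero_of_skew_adjoint_pair hadj (hg n n.lt_succ_self)
      (ih fun j hj => hg j (hj.trans n.lt_succ_self))

/-- orthogonality propagation along ladder orbits: if
`⟨X₊a, b⟩ = −⟨a, X₋b⟩`, `⟨f, g⟩ = 0`, and `X₋X₊` acts by the same scalar `cⱼ` on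
`X₊ʲf` and `X₊ʲg` for all `j < l`, then `⟨X₊ˡf, X₊ˡg⟩ = 0`. -/
theorem ladder_orbit_orthogonality {H : Type*} [NormedAddCommGroup H] [InnerProductSpace ℂ H]
    (Xp Xm : H →ₗ[ℂ] H)
    (hadj : ∀ a b : H, ⟪Xp a, b⟫ = -⟪a, Xm b⟫)
    (f g : H) (hfg : ⟪f, g⟫ = 0) (l : ℕ) (c : ℕ → ℂ)
    (hf : ∀ j < l, Xm (Xp ((Xp ^ j) f)) = c j • (Xp ^ j) f)
    (hg : ∀ j < l, Xm (Xp ((Xp ^ j) g)) = c j • (Xp ^ j) g) :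
    ⟪(Xp ^ l) f, (Xp ^ l) g⟫ = 0 :=
  ladder_orbit_orthogonality_general Xp Xm hadj f g hfg l c hg
end

section
/- Let H be a complex inner product space and k ≥ 1 a natural number. For 0 ≤ n ≤ k let T⁽ⁿ⁾ : H → H be linear maps, μ⁽ⁿ⁾ complex scalars, and φ⁽ⁿ⁾ ∈ H vectors. Assume: (i) T⁽⁰⁾ is symmetric, i.e. ⟨T⁽⁰⁾a, b⟩ = ⟨a, T⁽⁰⁾b⟩ for all a, b; (ii) T⁽⁰⁾φ⁽⁰⁾ = μ⁽⁰⁾φ⁽⁰⁾ with ‖φ⁽⁰⁾‖ = 1; (iii) for every l with 1 ≤ l ≤ k, Σ_{n=0}^{l} (T⁽ⁿ⁾φ⁽ˡ⁻ⁿ⁾ − μ⁽ⁿ⁾·φ⁽ˡ⁻ⁿ⁾) = 0. Then μ⁽ᵏ⁾ = ⟨T⁽ᵏ⁾φ⁽⁰⁾, φ⁽⁰⁾⟩ + Σ_{n=1}^{k−1} ⟨T⁽ⁿ⁾φ⁽ᵏ⁻ⁿ⁾ − μ⁽ⁿ⁾·φ⁽ᵏ⁻ⁿ⁾, φ⁽⁰⁾⟩.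 -/
open scoped ComplexInnerProductSpace

/-!
Pair the order-`k` equation of the recursion with `φ⁽⁰⁾`. The `n = 0` term vanishes because
`T⁽⁰⁾` is symmetric and `μ⁽⁰⁾`, an eigenvalue of a symmetric operator, is real; the `n = k` term
is `⟨T⁽ᵏ⁾φ⁽⁰⁾, φ⁽⁰⁾⟩ - μ⁽ᵏ⁾` since `φ⁽⁰⁾` is a unit vector. Solving for `μ⁽ᵏ⁾` gives the formula.
-/

theorem LinearMap.IsSymmetric.inner_apply_sub_smul_eq_zero {𝕜 E : Type*} [RCLike 𝕜]
    [NormedAddCommGroup E] [InnerProductSpace 𝕜 E] {T : E →ₗ[𝕜] E} (hT : T.IsSymmetric)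
    {μ : 𝕜} {v : E} (hv : T v = μ • v) (hv₀ : v ≠ 0) (w : E) :
    inner 𝕜 v (T w - μ • w) = 0 := by
  have hμ : starRingEnd 𝕜 μ = μ :=
    hT.conj_eigenvalue_eq_self
      (Module.End.hasEigenvalue_of_hasEigenvector ⟨Module.End.mem_eigenspace_iff.mpr hv, hv₀⟩)
  rw [inner_sub_right, ← hT, hv, inner_smul_left, inner_smul_right, hμ, sub_self]

theorem Finset.sum_range_succ_eq_add_sum_Icc_add {M : Type*} [AddCommMonoid M] (f : ℕ → M)
    {k : ℕ} (hk : 1 ≤ k) :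
    ∑ n ∈ range (k + 1), f n = f 0 + ∑ n ∈ Icc 1 (k - 1), f n + f k := by
  obtain ⟨m, rfl⟩ := Nat.exists_eq_add_of_le' hk
  rw [range_eq_Ico, sum_Ico_succ_top (Nat.zero_le _), sum_eq_sum_Ico_succ_bot (Nat.succ_pos m),
    Nat.zero_add, Nat.succ_eq_add_one, Nat.add_sub_cancel, Ico_add_one_right_eq_Icc]

/-- The paper's inner product `⟨a, b⟩` is linear in the first argument, Mathlib's `⟪a, b⟫` in
the second, so `⟨a, b⟩` is rendered `⟪b, a⟫`. -/
theorem taylor_coefficient_formula {H : Type*} [NormedAddCommGroup H] [InnerProductSpace ℂ H]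
    (k : ℕ) (hk : 1 ≤ k)
    (T : ℕ → H →ₗ[ℂ] H) (μ : ℕ → ℂ) (φ : ℕ → H)
    (hsym : ∀ a b : H, ⟪T 0 a, b⟫ = ⟪a, T 0 b⟫)
    (heig : T 0 (φ 0) = μ 0 • φ 0) (hnorm : ‖φ 0‖ = 1)
    (hrec : ∀ l, 1 ≤ l → l ≤ k →
      ∑ n ∈ Finset.range (l + 1), (T n (φ (l - n)) - μ n • φ (l - n)) = 0) :
    μ k = ⟪φ 0, T k (φ 0)⟫ +
      ∑ n ∈ Finset.Icc 1 (k - 1), ⟪φ 0, T n (φ (k - n)) - μ n • φ (k - n)⟫ := by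
  have hφ₀ : φ 0 ≠ 0 := norm_ne_zero_iff.mp (by rw [hnorm]; exact one_ne_zero)
  have hself : ⟪φ 0, φ 0⟫ = 1 := by
    rw [inner_self_eq_norm_sq_to_K, hnorm]
    norm_num
  have hfirst := LinearMap.IsSymmetric.inner_apply_sub_smul_eq_zero hsym heig hφ₀ (φ k)
  have h := congrArg (⟪φ 0, ·⟫) (hrec k hk le_rfl)
  rw [inner_sum, inner_zero_right, Finset.sum_range_succ_eq_add_sum_Icc_add _ hk,
    Nat.sub_zero, Nat.sub_self, hfirst, zero_add, inner_sub_right, inner_smul_right, hself] at h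
  linear_combination -h
end

section
/- Let H be a complex inner product space, let X₊, X₋, V : H → H be linear maps, and let K, η be real numbers. Assume: (i) V is skew-symmetric, ⟨V a, b⟩ = −⟨a, V b⟩ for all a, b; (ii) V∘X₊ − X₊∘V = i·X₊ and V∘X₋ − X₋∘V = −i·X₋; (iii) φ ∈ H satisfies ‖φ‖ = 1, V φ = 0, and (−2·X₊∘X₋ − 2·X₋∘X₊ − K·V∘V) φ = η·φ. Then −2·⟨(X₊ + X₋)((X₊ + X₋)φ), φ⟩ = η. -/
open scoped ComplexInnerProductSpace

/-! Expanding `(X₊ + X₋)²`, the cross terms give `-2(X₊X₋ + X₋X₊)φ = Ωφ = ηφ` since `V²φ = 0`.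
The squares `X₊²φ`, `X₋²φ` are `V`-eigenvectors with eigenvalues `±2i ≠ 0` (each `X±` shifts the
eigenvalue by `±i`), and eigenvectors of a skew map for a nonzero eigenvalue are orthogonal to its
kernel. -/

theorem apply_eq_add_smul_of_commutator_eq_smul {R M : Type*} [CommRing R] [AddCommGroup M]
    [Module R M] {V X : M →ₗ[R] M} {c d : R} (hVX : V ∘ₗ X - X ∘ₗ V = c • X) {x : M}
    (hx : V x = d • x) : V (X x) = (d + c) • X x := by
  have h := LinearMap.congr_fun hVX x
  simp only [LinearMap.sub_apply, LinearMap.comp_apply, LinearMap.smul_apply, hx,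
    map_smul] at h
  linear_combination (norm := module) h

theorem inner_eq_zero_of_skew_of_apply_eq_smul {𝕜 E : Type*} [RCLike 𝕜] [NormedAddCommGroup E]
    [InnerProductSpace 𝕜 E] {V : E →ₗ[𝕜] E}
    (hskew : ∀ a b : E, inner 𝕜 (V a) b = -inner 𝕜 a (V b))
    {x φ : E} {c : 𝕜} (hc : c ≠ 0) (hx : V x = c • x) (hφ : V φ = 0) : inner 𝕜 x φ = 0 := by
  have h := hskew x φ
  rw [hx, hφ, inner_zero_right, neg_zero, inner_smul_left] at h
  exact (mul_eq_zero.mp h).resolve_left (by simpa using hc)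

/-- the second-order coefficient equals the Casimir eigenvalue: if `V` is
skew-symmetric, `[V, X₊] = i·X₊`, `[V, X₋] = −i·X₋`, and the unit vector `φ` satisfies
`Vφ = 0` and `(−2X₊X₋ − 2X₋X₊ − K·V²)φ = ηφ`, then `−2·⟨(X₊+X₋)²φ, φ⟩ = η`. -/
theorem second_order_equals_eigenvalue {H : Type*}
    [NormedAddCommGroup H] [InnerProductSpace ℂ H]
    (Xp Xm V : H →ₗ[ℂ] H) (K η : ℝ)
    (hskew : ∀ a b : H, ⟪V a, b⟫ = -⟪a, V b⟫)
    (hp : V ∘ₗ Xp - Xp ∘ₗ V = Complex.I • Xp)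
    (hm : V ∘ₗ Xm - Xm ∘ₗ V = -(Complex.I • Xm))
    (φ : H) (hnorm : ‖φ‖ = 1) (hφ : V φ = 0)
    (hΩ : (-((2 : ℂ) • (Xp ∘ₗ Xm)) - (2 : ℂ) • (Xm ∘ₗ Xp) - (K : ℂ) • (V ∘ₗ V)) φ
        = (η : ℂ) • φ) :
    (-2 : ℂ) * ⟪(Xp + Xm) ((Xp + Xm) φ), φ⟫ = (η : ℂ) := by
  have hφ₀ : V φ = (0 : ℂ) • φ := by rw [hφ, zero_smul]
  have hm' : V ∘ₗ Xm - Xm ∘ₗ V = (-Complex.I) • Xm := by rw [hm, neg_smul]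
  have hpp : ⟪Xp (Xp φ), φ⟫ = 0 :=
    inner_eq_zero_of_skew_of_apply_eq_smul hskew (by simp [Complex.ext_iff])
      (apply_eq_add_smul_of_commutator_eq_smul hp
        (apply_eq_add_smul_of_commutator_eq_smul hp hφ₀)) hφ
  have hmm : ⟪Xm (Xm φ), φ⟫ = 0 :=
    inner_eq_zero_of_skew_of_apply_eq_smul hskew (by simp [Complex.ext_iff])
      (apply_eq_add_smul_of_commutator_eq_smul hm'
        (apply_eq_add_smul_of_commutator_eq_smul hm' hφ₀)) hφ
  have hcasimir : (-2 : ℂ) • (Xp (Xm φ) + Xm (Xp φ)) = (η : ℂ) • φ := by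
    simp only [LinearMap.sub_apply, LinearMap.neg_apply, LinearMap.smul_apply,
      LinearMap.comp_apply, hφ, map_zero, smul_zero, sub_zero] at hΩ
    linear_combination (norm := module) hΩ
  have hφφ : ⟪φ, φ⟫ = (1 : ℂ) := by simp [inner_self_eq_norm_sq_to_K, hnorm]
  calc (-2 : ℂ) * ⟪(Xp + Xm) ((Xp + Xm) φ), φ⟫
      = ⟪(-2 : ℂ) • (Xp (Xm φ) + Xm (Xp φ)), φ⟫ := by
        simp only [LinearMap.add_apply, map_add, inner_add_left, inner_smul_left, hpp, hmm,
          map_neg, map_ofNat]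
        ring
    _ = η := by rw [hcasimir, inner_smul_left, hφφ, Complex.conj_ofReal, mul_one]
end

section
/- Let H be a complex inner product space, let X₊, X₋, V : H → H be linear maps, and let K, η be real numbers. Assume: (i) ⟨X₊ a, b⟩ = −⟨a, X₋ b⟩ for all a, b ∈ H; (ii) V is skew-symmetric, ⟨V a, b⟩ = −⟨a, V b⟩ for all a, b; (iii) V∘X₊ − X₊∘V = i·X₊ and V∘X₋ − X₋∘V = −i·X₋; (iv) X₊∘X₋ − X₋∘X₊ = (i K/2)·V; (v) φ ∈ H satisfies ‖φ‖ = 1, V φ = 0, and (−4·X₊∘X₋ + i K·V − K·V∘V) φ = η·φ. Then ‖(X₊ + X₋) φ‖² = η/2. -/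
/-!
On `φ` the Casimir relation reduces to `X₊X₋φ = -(η/4)φ`, and `[X₊, X₋]φ = 0`, so also
`X₋X₊φ = -(η/4)φ`. Since `X₋` is minus the adjoint of `X₊`, this gives
`‖X₊φ‖² = ‖X₋φ‖² = η/4`. The commutation relations with `V` make `X₊φ` and `X₋φ`
eigenvectors of the skew-symmetric `V` for the eigenvalues `i` and `-i`, hence orthogonal,
and Pythagoras gives `‖(X₊ + X₋)φ‖² = η/2`.
-/

open scoped InnerProductSpace ComplexInnerProductSpace

section Commutator

variable {R M : Type*} [CommRing R] [AddCommGroup M] [Module R M]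

theorem apply_apply_eq_smul_of_commutator_eq_smul {V X : M →ₗ[R] M} {c : R}
    (h : V ∘ₗ X - X ∘ₗ V = c • X) {φ : M} (hφ : V φ = 0) : V (X φ) = c • X φ := by
  simpa [hφ] using LinearMap.congr_fun h φ

theorem apply_comm_of_commutator_eq_smul {A B V : M →ₗ[R] M} {c : R}
    (h : A ∘ₗ B - B ∘ₗ A = c • V) {φ : M} (hφ : V φ = 0) : A (B φ) = B (A φ) := by
  simpa [hφ, sub_eq_zero] using LinearMap.congr_fun h φ

end Commutator

section InnerProduct

variable {𝕜 E : Type*} [RCLike 𝕜] [NormedAddCommGroup E] [InnerProductSpace 𝕜 E]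

theorem inner_apply_eq_neg_symm {A B : E →ₗ[𝕜] E} (h : ∀ a b : E, ⟪A a, b⟫_𝕜 = -⟪a, B b⟫_𝕜)
    (a b : E) : ⟪B a, b⟫_𝕜 = -⟪a, A b⟫_𝕜 := by
  rw [← inner_conj_symm, ← inner_conj_symm a, h, map_neg, neg_neg]

theorem norm_apply_sq_of_inner_apply_eq_neg {A B : E →ₗ[𝕜] E}
    (h : ∀ a b : E, ⟪A a, b⟫_𝕜 = -⟪a, B b⟫_𝕜) {x : E} {c : ℝ} (hx : B (A x) = -(c : 𝕜) • x) :
    ‖A x‖ ^ 2 = c * ‖x‖ ^ 2 := by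
  rw [@norm_sq_eq_re_inner 𝕜, h, hx, inner_smul_right, neg_mul, neg_neg,
    RCLike.re_ofReal_mul, ← @inner_self_eq_norm_sq 𝕜]

theorem inner_eq_zero_of_skew_of_eigen {V : E →ₗ[𝕜] E}
    (hV : ∀ a b : E, ⟪V a, b⟫_𝕜 = -⟪a, V b⟫_𝕜) {x y : E} {μ ν : 𝕜}
    (hx : V x = μ • x) (hy : V y = ν • y) (hμν : starRingEnd 𝕜 μ + ν ≠ 0) : ⟪x, y⟫_𝕜 = 0 := by
  have h := hV x y
  rw [hx, hy, inner_smul_left, inner_smul_right] at h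
  exact (mul_eq_zero.mp (by linear_combination h)).resolve_left hμν

end InnerProduct

/-- the norm of the geodesic vector field on the zero Fourier mode
(Remark 4.2): if `⟨X₊a, b⟩ = −⟨a, X₋b⟩`, `V` is skew-symmetric, `[V, X₊] = i·X₊`,
`[V, X₋] = −i·X₋`, `[X₊, X₋] = (iK/2)·V`, and the unit vector `φ` satisfies `Vφ = 0`
and `(−4X₊X₋ + iK·V − K·V²)φ = ηφ`, then `‖(X₊ + X₋)φ‖² = η/2`. -/
theorem geodesic_norm_on_zero_mode {H : Type*}
    [NormedAddCommGroup H] [InnerProductSpace ℂ H]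
    (Xp Xm V : H →ₗ[ℂ] H) (K η : ℝ)
    (hadj : ∀ a b : H, ⟪Xp a, b⟫ = -⟪a, Xm b⟫)
    (hskew : ∀ a b : H, ⟪V a, b⟫ = -⟪a, V b⟫)
    (hp : V ∘ₗ Xp - Xp ∘ₗ V = Complex.I • Xp)
    (hm : V ∘ₗ Xm - Xm ∘ₗ V = -(Complex.I • Xm))
    (hcomm : Xp ∘ₗ Xm - Xm ∘ₗ Xp = ((Complex.I * (K : ℂ)) / 2) • V)
    (φ : H) (hnorm : ‖φ‖ = 1) (hφ : V φ = 0)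
    (hΩ : (-((4 : ℂ) • (Xp ∘ₗ Xm)) + (Complex.I * (K : ℂ)) • V - (K : ℂ) • (V ∘ₗ V)) φ
        = (η : ℂ) • φ) :
    ‖(Xp + Xm) φ‖ ^ 2 = η / 2 := by
  have hXpXm : Xp (Xm φ) = -((η / 4 : ℝ) : ℂ) • φ := by
    have h : -((4 : ℂ) • Xp (Xm φ)) = (η : ℂ) • φ := by simpa [hφ] using hΩ
    rw [neg_eq_iff_eq_neg, ← neg_smul] at h
    rw [← inv_smul_smul₀ (by norm_num : (4 : ℂ) ≠ 0) (Xp (Xm φ)), h, smul_smul]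
    push_cast
    ring_nf
  have hXmXp : Xm (Xp φ) = -((η / 4 : ℝ) : ℂ) • φ :=
    (apply_comm_of_commutator_eq_smul hcomm hφ).symm.trans hXpXm
  have horth : ⟪Xp φ, Xm φ⟫ = 0 :=
    inner_eq_zero_of_skew_of_eigen hskew (apply_apply_eq_smul_of_commutator_eq_smul hp hφ)
      (apply_apply_eq_smul_of_commutator_eq_smul (hm.trans (neg_smul _ _).symm) hφ)
      (by simp [Complex.I_ne_zero])
  rw [LinearMap.add_apply, @norm_add_sq ℂ, horth,
    norm_apply_sq_of_inner_apply_eq_neg (c := η / 4) hadj hXmXp,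
    norm_apply_sq_of_inner_apply_eq_neg (c := η / 4) (inner_apply_eq_neg_symm hadj) hXpXm,
    hnorm, map_zero]
  ring
end
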